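/- arXiv:1712.02292 — 6 statements merged into one kernel-verified Lean document; each statement's English description precedes it below -/
import Mathlib

section
/- Let V be a finite-dimensional real inner product space, let σ⁰ ∈ V with σ⁰ ≠ 0, and let W : V → ℝ be a continuous function with W(σ⁰) > 0. Let (cₙ) be a sequence of nonnegative real numbers with cₙ → 0, and for each n let Cₙ : V → V be a self-adjoint positive definite linear operator such that: (i) W(σ) ≤ ⟨σ, Cₙ⁻¹σ⟩ for every σ ∈ V; (ii) ⟨σ⁰, Cₙ⁻¹σ⁰⟩ ≤ W(σ⁰) + cₙ; (iii) ⟨e, Cₙe⟩ ≤ cₙ‖e‖² for every e ∈ V with ⟨e, σ⁰⟩ = 0. Then for every ε⁰ ∈ V with ⟨σ⁰, ε⁰⟩ = W(σ⁰), the sequence Cₙε⁰ converges to σ⁰ in V. -/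
/-!
Write `s = ‖σ⁰‖²` and `qₙ = ⟪σ⁰, Cₙ σ⁰⟫`. Cauchy–Schwarz for the form `⟪·, Cₙ ·⟫` gives
`s² ≤ ⟪σ⁰, Cₙ⁻¹ σ⁰⟫ qₙ ≤ (W σ⁰ + cₙ) qₙ`, with equality at the stress `σ'ₙ = (s / qₙ) Cₙ σ⁰`,
where the bound (i) reads `W σ'ₙ · qₙ ≤ s²`. Small energy on `σ⁰ᗮ` bounds the square norm of
the `σ⁰ᗮ`-component of `Cₙ u` by `cₙ ⟪u, Cₙ u⟫`; hence `σ'ₙ → σ⁰`, continuity of `W` squeezes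
`qₙ → s² / W σ⁰`, and `Cₙ` converges pointwise to the rank-one map `u ↦ (⟪σ⁰, u⟫ / W σ⁰) σ⁰`,
which sends `ε⁰` to `σ⁰`.
-/

open scoped RealInnerProductSpace
open Filter Topology

theorem tendsto_of_sq_norm_sub_le {E ι : Type*} [SeminormedAddCommGroup E] {l : Filter ι}
    {x : ι → E} {y : E} {b : ι → ℝ}
    (hb : Tendsto b l (𝓝 0)) (h : ∀ i, ‖x i - y‖ ^ 2 ≤ b i) : Tendsto x l (𝓝 y) := by
  rw [tendsto_iff_norm_sub_tendsto_zero]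
  refine squeeze_zero (fun _ => norm_nonneg _) (fun i => ?_) (by simpa using hb.sqrt)
  simpa using Real.abs_le_sqrt (h i)

section

variable {V : Type*} [NormedAddCommGroup V] [InnerProductSpace ℝ V]

namespace LinearMap.IsPositive

variable {T : V →ₗ[ℝ] V}

theorem inner_map_sq_le (hT : T.IsPositive) (u v : V) :
    ⟪u, T v⟫ ^ 2 ≤ ⟪u, T u⟫ * ⟪v, T v⟫ := by
  have hsymm : ⟪v, T u⟫ = ⟪u, T v⟫ := by rw [← hT.isSymmetric, real_inner_comm]
  have hquad : ∀ t : ℝ, 0 ≤ ⟪v, T v⟫ * (t * t) + 2 * ⟪u, T v⟫ * t + ⟪u, T u⟫ := fun t => by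
    have := hT.inner_nonneg_right (u + t • v)
    simp only [map_add, map_smul, inner_add_left, inner_add_right, real_inner_smul_left,
      real_inner_smul_right, hsymm] at this
    linarith
  have := discrim_le_zero hquad
  rw [discrim] at this
  nlinarith

theorem sq_norm_starProjection_map_le (hT : T.IsPositive) (K : Submodule ℝ V)
    [K.HasOrthogonalProjection] {c : ℝ} (hc : 0 ≤ c) (hK : ∀ e ∈ K, ⟪e, T e⟫ ≤ c * ‖e‖ ^ 2)
    (u : V) : ‖K.starProjection (T u)‖ ^ 2 ≤ c * ⟪u, T u⟫ := by
  set g := K.starProjection (T u)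
  have hg : ‖g‖ ^ 2 = ⟪g, T u⟫ := by
    have := K.starProjection_inner_eq_zero (T u) g (K.starProjection_apply_mem _)
    rw [inner_sub_left, real_inner_comm] at this
    rw [← real_inner_self_eq_norm_sq]
    linarith
  have key : ‖g‖ ^ 2 * ‖g‖ ^ 2 ≤ ‖g‖ ^ 2 * (c * ⟪u, T u⟫) :=
    calc ‖g‖ ^ 2 * ‖g‖ ^ 2 = ⟪g, T u⟫ ^ 2 := by rw [hg]; ring
      _ ≤ ⟪g, T g⟫ * ⟪u, T u⟫ := hT.inner_map_sq_le g u
      _ ≤ c * ‖g‖ ^ 2 * ⟪u, T u⟫ :=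
        mul_le_mul_of_nonneg_right (hK g (K.starProjection_apply_mem _))
          (hT.inner_nonneg_right u)
      _ = ‖g‖ ^ 2 * (c * ⟪u, T u⟫) := by ring
  rcases (sq_nonneg ‖g‖).eq_or_lt with hg0 | hg0
  · rw [← hg0]; exact mul_nonneg hc (hT.inner_nonneg_right u)
  · exact le_of_mul_le_mul_left key hg0

end LinearMap.IsPositive

theorem sq_norm_sq_le_inner_symm_mul_inner {C : V ≃ₗ[ℝ] V} (hC : (C : V →ₗ[ℝ] V).IsPositive)
    (σ : V) : (‖σ‖ ^ 2) ^ 2 ≤ ⟪σ, C.symm σ⟫ * ⟪σ, C σ⟫ := by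
  have hσ : ⟪C.symm σ, C σ⟫ = ‖σ‖ ^ 2 := by
    rw [← real_inner_self_eq_norm_sq]
    simpa using (hC.isSymmetric (C.symm σ) σ).symm
  have h := hC.inner_map_sq_le (C.symm σ) σ
  simp only [LinearEquiv.coe_coe, LinearEquiv.apply_symm_apply, hσ] at h
  rwa [real_inner_comm (C.symm σ) σ]

theorem smul_add_starProjection_orthogonal_singleton (σ u : V) :
    (⟪σ, u⟫ / ‖σ‖ ^ 2) • σ + (ℝ ∙ σ)ᗮ.starProjection u = u := by
  simp [Submodule.starProjection_singleton]

theorem sq_norm_smul_apply_sub_le {C : V ≃ₗ[ℝ] V} (hC : (C : V →ₗ[ℝ] V).IsPositive) {σ : V}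
    (hσ : 0 < ⟪σ, C σ⟫) {c : ℝ} (hc : 0 ≤ c)
    (hsmall : ∀ e ∈ (ℝ ∙ σ)ᗮ, ⟪e, C e⟫ ≤ c * ‖e‖ ^ 2) :
    ‖(‖σ‖ ^ 2 / ⟪σ, C σ⟫) • C σ - σ‖ ^ 2 ≤ c * ⟪σ, C.symm σ⟫ := by
  set q := ⟪σ, C σ⟫
  set s := ‖σ‖ ^ 2
  set g := (ℝ ∙ σ)ᗮ.starProjection (C σ)
  have hs : 0 < s := by
    have : σ ≠ 0 := by rintro rfl; simp [q] at hσ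
    positivity
  have hdiff : (s / q) • C σ - σ = (s / q) • g := by
    rw [← smul_add_starProjection_orthogonal_singleton σ (C σ), smul_add, smul_smul,
      show s / q * (q / s) = 1 by field_simp, one_smul, add_sub_cancel_left]
  have hg : ‖g‖ ^ 2 ≤ c * q := hC.sq_norm_starProjection_map_le _ hc hsmall σ
  calc ‖(s / q) • C σ - σ‖ ^ 2 = (s / q) ^ 2 * ‖g‖ ^ 2 := by
        rw [hdiff, norm_smul, mul_pow, Real.norm_eq_abs, sq_abs]
    _ ≤ (s / q) ^ 2 * (c * q) := mul_le_mul_of_nonneg_left hg (sq_nonneg _)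
    _ = c * (s ^ 2 / q) := by field_simp
    _ ≤ c * ⟪σ, C.symm σ⟫ := by
        gcongr
        rw [div_le_iff₀ hσ]
        exact sq_norm_sq_le_inner_symm_mul_inner hC σ

section Sequence

variable {σ0 : V} {W : V → ℝ} {c : ℕ → ℝ} {C : ℕ → V ≃ₗ[ℝ] V}

theorem tendsto_inner_apply_self
    (hC : ∀ n, (C n : V →ₗ[ℝ] V).IsPositive) (hq : ∀ n, 0 < ⟪σ0, C n σ0⟫)
    (hWcont : Continuous W) (hWpos : 0 < W σ0) (hc_nonneg : ∀ n, 0 ≤ c n)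
    (hc_lim : Tendsto c atTop (𝓝 0))
    (hbound : ∀ n σ, W σ ≤ ⟪σ, (C n).symm σ⟫)
    (hattain : ∀ n, ⟪σ0, (C n).symm σ0⟫ ≤ W σ0 + c n)
    (hsmall : ∀ n, ∀ e ∈ (ℝ ∙ σ0)ᗮ, ⟪e, C n e⟫ ≤ c n * ‖e‖ ^ 2) :
    Tendsto (fun n => ⟪σ0, C n σ0⟫) atTop (𝓝 ((‖σ0‖ ^ 2) ^ 2 / W σ0)) := by
  set s := ‖σ0‖ ^ 2
  set σ' : ℕ → V := fun n => (s / ⟪σ0, C n σ0⟫) • C n σ0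
  have hσ' : Tendsto σ' atTop (𝓝 σ0) := by
    refine tendsto_of_sq_norm_sub_le (b := fun n => c n * (W σ0 + c n)) ?_ fun n => ?_
    · simpa using hc_lim.mul (tendsto_const_nhds.add hc_lim)
    · exact (sq_norm_smul_apply_sub_le (hC n) (hq n) (hc_nonneg n) (hsmall n)).trans
        (mul_le_mul_of_nonneg_left (hattain n) (hc_nonneg n))
  have hWσ' : Tendsto (fun n => W (σ' n)) atTop (𝓝 (W σ0)) := (hWcont.tendsto σ0).comp hσ'
  have hlower : ∀ n, s ^ 2 / (W σ0 + c n) ≤ ⟪σ0, C n σ0⟫ := fun n => by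
    rw [div_le_iff₀ (by linarith [hc_nonneg n])]
    calc s ^ 2 ≤ ⟪σ0, (C n).symm σ0⟫ * ⟪σ0, C n σ0⟫ :=
          sq_norm_sq_le_inner_symm_mul_inner (hC n) σ0
      _ ≤ ⟪σ0, C n σ0⟫ * (W σ0 + c n) := by nlinarith [hattain n, hq n]
  have hupper : ∀ n, W (σ' n) * ⟪σ0, C n σ0⟫ ≤ s ^ 2 := fun n => by
    have hdual : ⟪σ' n, (C n).symm (σ' n)⟫ * ⟪σ0, C n σ0⟫ = s ^ 2 := by
      simp only [σ', map_smul, LinearEquiv.symm_apply_apply, real_inner_smul_right,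
        real_inner_comm σ0]
      field_simp [(hq n).ne']
    nlinarith [hbound n (σ' n), hq n]
  refine tendsto_of_tendsto_of_tendsto_of_le_of_le' (g := fun n => s ^ 2 / (W σ0 + c n))
    (h := fun n => s ^ 2 / W (σ' n)) ?_ ?_ (Eventually.of_forall hlower) ?_
  · have h := (tendsto_const_nhds (x := s ^ 2)).div (tendsto_const_nhds.add hc_lim)
      (by simpa using hWpos.ne')
    rwa [add_zero] at h
  · exact tendsto_const_nhds.div hWσ' hWpos.ne'
  · filter_upwards [hWσ'.eventually (eventually_gt_nhds hWpos)] with n hn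
    rw [le_div_iff₀ hn, mul_comm]
    exact hupper n

theorem tendsto_apply_self (hC : ∀ n, (C n : V →ₗ[ℝ] V).IsPositive) (hc_nonneg : ∀ n, 0 ≤ c n)
    (hc_lim : Tendsto c atTop (𝓝 0))
    (hsmall : ∀ n, ∀ e ∈ (ℝ ∙ σ0)ᗮ, ⟪e, C n e⟫ ≤ c n * ‖e‖ ^ 2) {Q : ℝ}
    (hq_lim : Tendsto (fun n => ⟪σ0, C n σ0⟫) atTop (𝓝 Q)) :
    Tendsto (fun n => C n σ0) atTop (𝓝 ((Q / ‖σ0‖ ^ 2) • σ0)) := by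
  have hperp : Tendsto (fun n => (ℝ ∙ σ0)ᗮ.starProjection (C n σ0)) atTop (𝓝 0) :=
    tendsto_of_sq_norm_sub_le (b := fun n => c n * ⟪σ0, C n σ0⟫)
      (by simpa using hc_lim.mul hq_lim)
      fun n => by
        rw [sub_zero]
        exact (hC n).sq_norm_starProjection_map_le _ (hc_nonneg n) (hsmall n) σ0
  have h := ((hq_lim.div_const (‖σ0‖ ^ 2)).smul_const σ0).add hperp
  rw [add_zero] at h
  exact h.congr fun n => smul_add_starProjection_orthogonal_singleton σ0 (C n σ0)

theorem tendsto_apply_of_mem_orthogonal (hC : ∀ n, (C n : V →ₗ[ℝ] V).IsPositive)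
    (hc_nonneg : ∀ n, 0 ≤ c n) (hc_lim : Tendsto c atTop (𝓝 0))
    (hsmall : ∀ n, ∀ e ∈ (ℝ ∙ σ0)ᗮ, ⟪e, C n e⟫ ≤ c n * ‖e‖ ^ 2) {t : ℝ}
    (hσ0 : Tendsto (fun n => C n σ0) atTop (𝓝 (t • σ0))) {e : V} (he : e ∈ (ℝ ∙ σ0)ᗮ) :
    Tendsto (fun n => C n e) atTop (𝓝 0) := by
  have hpar : Tendsto (fun n => ⟪σ0, C n e⟫) atTop (𝓝 0) := by
    have h := hσ0.inner (𝕜 := ℝ) (tendsto_const_nhds (x := e))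
    rw [real_inner_smul_left, Submodule.mem_orthogonal_singleton_iff_inner_right.1 he,
      mul_zero] at h
    exact h.congr fun n => (hC n).isSymmetric σ0 e
  have hperp : Tendsto (fun n => (ℝ ∙ σ0)ᗮ.starProjection (C n e)) atTop (𝓝 0) :=
    tendsto_of_sq_norm_sub_le (b := fun n => c n * (c n * ‖e‖ ^ 2))
      (by simpa using hc_lim.mul (hc_lim.mul_const _))
      fun n => by
        rw [sub_zero]
        exact ((hC n).sq_norm_starProjection_map_le _ (hc_nonneg n) (hsmall n) e).trans
          (mul_le_mul_of_nonneg_left (hsmall n e he) (hc_nonneg n))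
  have h := ((hpar.div_const (‖σ0‖ ^ 2)).smul_const σ0).add hperp
  simp only [zero_div, zero_smul, add_zero] at h
  exact h.congr fun n => smul_add_starProjection_orthogonal_singleton σ0 (C n e)

end Sequence

end

theorem weak_G_closure_pentamode_general
    {V : Type*} [NormedAddCommGroup V] [InnerProductSpace ℝ V]
    (σ0 : V) (hσ0 : σ0 ≠ 0)
    (W : V → ℝ) (hWcont : Continuous W) (hWpos : 0 < W σ0)
    (c : ℕ → ℝ) (hc_nonneg : ∀ n, 0 ≤ c n)
    (hc_lim : Filter.Tendsto c Filter.atTop (nhds 0))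
    (C : ℕ → (V ≃ₗ[ℝ] V))
    (hC_sa : ∀ n, ∀ u v : V, ⟪(C n) u, v⟫ = ⟪u, (C n) v⟫)
    (hC_pd : ∀ n, ∀ u : V, u ≠ 0 → 0 < ⟪u, (C n) u⟫)
    (hbound : ∀ n, ∀ σ : V, W σ ≤ ⟪σ, (C n).symm σ⟫)
    (hattain : ∀ n, ⟪σ0, (C n).symm σ0⟫ ≤ W σ0 + c n)
    (hsmall : ∀ n, ∀ e : V, ⟪e, σ0⟫ = 0 → ⟪e, (C n) e⟫ ≤ c n * ‖e‖ ^ 2) :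
    ∀ ε0 : V, ⟪σ0, ε0⟫ = W σ0 →
      Filter.Tendsto (fun n => (C n) ε0) Filter.atTop (nhds σ0) := by
  intro ε0 hε0
  have hC : ∀ n, (C n : V →ₗ[ℝ] V).IsPositive := fun n =>
    (LinearMap.isPositive_iff _).2 ⟨hC_sa n, fun u => by
      rcases eq_or_ne u 0 with rfl | hu
      · simp
      · rw [real_inner_comm]; exact (hC_pd n u hu).le⟩
  have hsmall_perp : ∀ n, ∀ e ∈ (ℝ ∙ σ0)ᗮ, ⟪e, C n e⟫ ≤ c n * ‖e‖ ^ 2 := fun n e he =>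
    hsmall n e (Submodule.mem_orthogonal_singleton_iff_inner_left.1 he)
  have hq_lim := tendsto_inner_apply_self hC (fun n => hC_pd n σ0 hσ0) hWcont hWpos hc_nonneg
    hc_lim hbound hattain hsmall_perp
  have hCσ0 := tendsto_apply_self hC hc_nonneg hc_lim hsmall_perp hq_lim
  have hCe0 := tendsto_apply_of_mem_orthogonal hC hc_nonneg hc_lim hsmall_perp hCσ0
    ((ℝ ∙ σ0)ᗮ.starProjection_apply_mem ε0)
  have hdec := smul_add_starProjection_orthogonal_singleton σ0 ε0
  rw [hε0] at hdec
  have hlim : (W σ0 / ‖σ0‖ ^ 2) • (((‖σ0‖ ^ 2) ^ 2 / W σ0 / ‖σ0‖ ^ 2) • σ0) + 0 = σ0 := by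
    have : ‖σ0‖ ≠ 0 := norm_ne_zero_iff.2 hσ0
    rw [smul_smul, add_zero]
    convert one_smul ℝ σ0
    field_simp
  rw [← hlim]
  refine ((hCσ0.const_smul _).add hCe0).congr fun n => ?_
  rw [← map_smul, ← map_add, hdec]

/-- Abstract core of Theorem 3 of Milton & Camar-Eddine: if `Cₙ` are self-adjoint
positive definite operators nearly attaining the complementary energy bound `W` at `σ⁰`
and with small energy on the orthogonal complement of `σ⁰`, then for every `ε⁰` with
`⟪σ⁰, ε⁰⟫ = W σ⁰` one has `Cₙ ε⁰ → σ⁰`. -/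
theorem weak_G_closure_pentamode
    {V : Type*} [NormedAddCommGroup V] [InnerProductSpace ℝ V] [FiniteDimensional ℝ V]
    (σ0 : V) (hσ0 : σ0 ≠ 0)
    (W : V → ℝ) (hWcont : Continuous W) (hWpos : 0 < W σ0)
    (c : ℕ → ℝ) (hc_nonneg : ∀ n, 0 ≤ c n)
    (hc_lim : Filter.Tendsto c Filter.atTop (nhds 0))
    (C : ℕ → (V ≃ₗ[ℝ] V))
    (hC_sa : ∀ n, ∀ u v : V, ⟪(C n) u, v⟫ = ⟪u, (C n) v⟫)
    (hC_pd : ∀ n, ∀ u : V, u ≠ 0 → 0 < ⟪u, (C n) u⟫)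
    (hbound : ∀ n, ∀ σ : V, W σ ≤ ⟪σ, (C n).symm σ⟫)
    (hattain : ∀ n, ⟪σ0, (C n).symm σ0⟫ ≤ W σ0 + c n)
    (hsmall : ∀ n, ∀ e : V, ⟪e, σ0⟫ = 0 → ⟪e, (C n) e⟫ ≤ c n * ‖e‖ ^ 2) :
    ∀ ε0 : V, ⟪σ0, ε0⟫ = W σ0 →
      Filter.Tendsto (fun n => (C n) ε0) Filter.atTop (nhds σ0) :=
  weak_G_closure_pentamode_general σ0 hσ0 W hWcont hWpos c hc_nonneg hc_lim C hC_sa hC_pd hbound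
    hattain hsmall
end

section
/- Let V be a finite-dimensional real inner product space, let C : V → V be a self-adjoint positive definite linear operator, let σ⁰ ∈ V with σ⁰ ≠ 0, and define σ_R := (‖σ⁰‖² / ⟨σ⁰, Cσ⁰⟩) · Cσ⁰ − σ⁰. Suppose c ≥ 0 is such that ⟨e, Ce⟩ ≤ c‖e‖² for every e ∈ V with ⟨e, σ⁰⟩ = 0. Then ‖σ_R‖² ≤ c · ‖σ⁰‖⁴ / ⟨σ⁰, Cσ⁰⟩, and hence ‖σ_R‖² ≤ c · ⟨σ⁰, C⁻¹σ⁰⟩. -/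
/-!
Since `σ_R ⟂ σ⁰`, `‖σ_R‖² = (‖σ⁰‖² / ⟪σ⁰, Cσ⁰⟫) ⟪σ_R, Cσ⁰⟫`, and Cauchy–Schwarz for the form
`⟪·, C ·⟫` gives `⟪σ_R, Cσ⁰⟫² ≤ ⟪σ_R, Cσ_R⟫ ⟪σ⁰, Cσ⁰⟫ ≤ c ‖σ_R‖² ⟪σ⁰, Cσ⁰⟫`.
The second bound follows from the first by Cauchy–Schwarz once more:
`‖σ⁰‖⁴ = ⟪σ⁰, C (C⁻¹σ⁰)⟫² ≤ ⟪σ⁰, Cσ⁰⟫ ⟪σ⁰, C⁻¹σ⁰⟫`.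
-/

open scoped RealInnerProductSpace

namespace LinearMap.IsPositive

variable {V : Type*} [NormedAddCommGroup V] [InnerProductSpace ℝ V]

theorem real_inner_map_sq_le {T : V →ₗ[ℝ] V} (hT : T.IsPositive) (x y : V) :
    ⟪x, T y⟫ ^ 2 ≤ ⟪x, T x⟫ * ⟪y, T y⟫ :=
  BilinForm.apply_sq_le_of_symm ((innerₗ V).compl₂ T) hT.inner_nonneg_right
    ⟨fun x y => (real_inner_comm _ _).trans (hT.isSymmetric y x)⟩ x y

theorem norm_pow_four_le_inner_mul_inner_symm (T : V ≃ₗ[ℝ] V)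
    (hT : (T : V →ₗ[ℝ] V).IsPositive) (x : V) :
    ‖x‖ ^ 4 ≤ ⟪x, T x⟫ * ⟪x, T.symm x⟫ := by
  have h := hT.real_inner_map_sq_le x (T.symm x)
  simp only [LinearEquiv.coe_coe, LinearEquiv.apply_symm_apply, real_inner_self_eq_norm_sq,
    real_inner_comm x (T.symm x)] at h
  linarith

end LinearMap.IsPositive

section Perturbation

variable {V : Type*} [NormedAddCommGroup V] [InnerProductSpace ℝ V]

noncomputable def perturbation (T : V →ₗ[ℝ] V) (σ : V) : V :=
  (‖σ‖ ^ 2 / ⟪σ, T σ⟫) • T σ - σ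

variable (T : V →ₗ[ℝ] V) (σ : V)

theorem inner_perturbation_self (h : ⟪σ, T σ⟫ ≠ 0) : ⟪perturbation T σ, σ⟫ = 0 := by
  rw [perturbation, inner_sub_left, real_inner_smul_left, real_inner_comm σ (T σ),
    real_inner_self_eq_norm_sq, div_mul_cancel₀ _ h, sub_self]

theorem norm_perturbation_sq (h : ⟪σ, T σ⟫ ≠ 0) :
    ‖perturbation T σ‖ ^ 2 = ‖σ‖ ^ 2 / ⟪σ, T σ⟫ * ⟪perturbation T σ, T σ⟫ := by
  rw [← real_inner_self_eq_norm_sq]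
  nth_rewrite 2 [perturbation]
  rw [inner_sub_right, real_inner_smul_right, inner_perturbation_self T σ h, sub_zero]

variable {T} in
theorem norm_perturbation_sq_le (hT : T.IsPositive) (hσ : 0 < ⟪σ, T σ⟫) {c : ℝ} (hc : 0 ≤ c)
    (hsmall : ⟪perturbation T σ, T (perturbation T σ)⟫ ≤ c * ‖perturbation T σ‖ ^ 2) :
    ‖perturbation T σ‖ ^ 2 ≤ c * ‖σ‖ ^ 4 / ⟪σ, T σ⟫ := by
  set w := perturbation T σ
  set a := ⟪σ, T σ⟫
  have hsq : ‖w‖ ^ 2 * ‖w‖ ^ 2 ≤ c * ‖σ‖ ^ 4 / a * ‖w‖ ^ 2 :=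
    calc ‖w‖ ^ 2 * ‖w‖ ^ 2 = (‖σ‖ ^ 2 / a) ^ 2 * ⟪w, T σ⟫ ^ 2 := by
          rw [norm_perturbation_sq T σ hσ.ne']; ring
      _ ≤ (‖σ‖ ^ 2 / a) ^ 2 * (⟪w, T w⟫ * a) := by gcongr; exact hT.real_inner_map_sq_le w σ
      _ ≤ (‖σ‖ ^ 2 / a) ^ 2 * (c * ‖w‖ ^ 2 * a) := by gcongr
      _ = c * ‖σ‖ ^ 4 / a * ‖w‖ ^ 2 := by field_simp
  rcases (sq_nonneg ‖w‖).eq_or_lt with h0 | hw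
  · rw [← h0]; positivity
  · exact le_of_mul_le_mul_right hsq hw

end Perturbation

theorem perturbation_norm_bound_general
    {V : Type*} [NormedAddCommGroup V] [InnerProductSpace ℝ V]
    (C : V ≃ₗ[ℝ] V)
    (hC_sa : ∀ u v : V, ⟪C u, v⟫ = ⟪u, C v⟫)
    (hC_pd : ∀ u : V, u ≠ 0 → 0 < ⟪u, C u⟫)
    (σ0 : V) (hσ0 : σ0 ≠ 0)
    (σR : V) (hσR : σR = (‖σ0‖ ^ 2 / ⟪σ0, C σ0⟫) • C σ0 - σ0)
    (c : ℝ) (hc : 0 ≤ c)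
    (hsmall : ∀ e : V, ⟪e, σ0⟫ = 0 → ⟪e, C e⟫ ≤ c * ‖e‖ ^ 2) :
    ‖σR‖ ^ 2 ≤ c * ‖σ0‖ ^ 4 / ⟪σ0, C σ0⟫ ∧
      ‖σR‖ ^ 2 ≤ c * ⟪σ0, C.symm σ0⟫ := by
  have hC : (C : V →ₗ[ℝ] V).IsPositive := by
    refine (LinearMap.isPositive_iff _).2 ⟨hC_sa, fun u => ?_⟩
    rcases eq_or_ne u 0 with rfl | hu
    · simp
    · exact real_inner_comm u (C u) ▸ (hC_pd u hu).le
  have ha : 0 < ⟪σ0, C σ0⟫ := hC_pd σ0 hσ0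
  have hbound : ‖σR‖ ^ 2 ≤ c * ‖σ0‖ ^ 4 / ⟪σ0, C σ0⟫ := by
    subst hσR
    exact norm_perturbation_sq_le σ0 hC ha hc
      (hsmall _ (inner_perturbation_self (C : V →ₗ[ℝ] V) σ0 ha.ne'))
  refine ⟨hbound, hbound.trans ?_⟩
  rw [mul_div_assoc]
  gcongr
  rw [div_le_iff₀' ha]
  exact hC.norm_pow_four_le_inner_mul_inner_symm C σ0

/-- Quantitative form of (1.27)-(1.28): if the quadratic form of `C` is bounded by
`c` on the orthogonal complement of `σ⁰`, then the perturbation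
`σ_R := (‖σ⁰‖²/⟪σ⁰, Cσ⁰⟫) • Cσ⁰ − σ⁰` satisfies
`‖σ_R‖² ≤ c ‖σ⁰‖⁴/⟪σ⁰, Cσ⁰⟫` and hence `‖σ_R‖² ≤ c ⟪σ⁰, C⁻¹σ⁰⟫`. -/
theorem perturbation_norm_bound
    {V : Type*} [NormedAddCommGroup V] [InnerProductSpace ℝ V] [FiniteDimensional ℝ V]
    (C : V ≃ₗ[ℝ] V)
    (hC_sa : ∀ u v : V, ⟪C u, v⟫ = ⟪u, C v⟫)
    (hC_pd : ∀ u : V, u ≠ 0 → 0 < ⟪u, C u⟫)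
    (σ0 : V) (hσ0 : σ0 ≠ 0)
    (σR : V) (hσR : σR = (‖σ0‖ ^ 2 / ⟪σ0, C σ0⟫) • C σ0 - σ0)
    (c : ℝ) (hc : 0 ≤ c)
    (hsmall : ∀ e : V, ⟪e, σ0⟫ = 0 → ⟪e, C e⟫ ≤ c * ‖e‖ ^ 2) :
    ‖σR‖ ^ 2 ≤ c * ‖σ0‖ ^ 4 / ⟪σ0, C σ0⟫ ∧
      ‖σR‖ ^ 2 ≤ c * ⟪σ0, C.symm σ0⟫ :=
  perturbation_norm_bound_general C hC_sa hC_pd σ0 hσ0 σR hσR c hc hsmall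
end

section
/- Let V be a finite-dimensional real inner product space, let C : V → V be a self-adjoint positive definite linear operator, let σ⁰ ∈ V with σ⁰ ≠ 0, and define σ_R := (‖σ⁰‖² / ⟨σ⁰, Cσ⁰⟩) · Cσ⁰ − σ⁰. Let W : V → ℝ satisfy W(σ) ≤ ⟨σ, C⁻¹σ⟩ for every σ ∈ V, and let c ≥ 0 satisfy ⟨σ⁰, C⁻¹σ⁰⟩ ≤ W(σ⁰) + c. Then W(σ⁰ + σ_R) ≤ ‖σ⁰‖⁴ / ⟨σ⁰, Cσ⁰⟩ ≤ W(σ⁰) + c. -/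
open scoped RealInnerProductSpace

/-- The sandwich inequality (1.28) of the paper: if `W σ ≤ ⟪σ, C⁻¹σ⟫` for all `σ` and
`⟪σ⁰, C⁻¹σ⁰⟫ ≤ W σ⁰ + c`, then with `σ_R := (‖σ⁰‖²/⟪σ⁰, Cσ⁰⟫) • Cσ⁰ − σ⁰` one has
`W (σ⁰ + σ_R) ≤ ‖σ⁰‖⁴/⟪σ⁰, Cσ⁰⟫ ≤ W σ⁰ + c`. -/
theorem sandwich_inequality
    {V : Type*} [NormedAddCommGroup V] [InnerProductSpace ℝ V] [FiniteDimensional ℝ V]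
    (C : V ≃ₗ[ℝ] V)
    (hC_sa : ∀ u v : V, ⟪C u, v⟫ = ⟪u, C v⟫)
    (hC_pd : ∀ u : V, u ≠ 0 → 0 < ⟪u, C u⟫)
    (σ0 : V) (hσ0 : σ0 ≠ 0)
    (σR : V) (hσR : σR = (‖σ0‖ ^ 2 / ⟪σ0, C σ0⟫) • C σ0 - σ0)
    (W : V → ℝ)
    (hbound : ∀ σ : V, W σ ≤ ⟪σ, C.symm σ⟫)
    (c : ℝ) (hc : 0 ≤ c)
    (hattain : ⟪σ0, C.symm σ0⟫ ≤ W σ0 + c) :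
    W (σ0 + σR) ≤ ‖σ0‖ ^ 4 / ⟪σ0, C σ0⟫ ∧
      ‖σ0‖ ^ 4 / ⟪σ0, C σ0⟫ ≤ W σ0 + c := by
  have hα : 0 < ⟪σ0, C σ0⟫ := hC_pd σ0 hσ0
  set α : ℝ := ⟪σ0, C σ0⟫ with hαdef
  set n : ℝ := ‖σ0‖ ^ 2 with hndef
  have hn : ⟪σ0, σ0⟫ = n := real_inner_self_eq_norm_sq σ0
  have hn4 : ‖σ0‖ ^ 4 = n ^ 2 := by rw [hndef]; ring
  set v : V := C.symm σ0 with hvdef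
  have hCv : C v = σ0 := C.apply_symm_apply σ0
  have hv0 : v ≠ 0 := by
    intro h
    apply hσ0
    rw [← hCv, h, map_zero]
  set β : ℝ := ⟪σ0, v⟫ with hβdef
  have hvCv : ⟪v, C v⟫ = β := by rw [hCv, real_inner_comm]
  have hβpos : 0 < β := hvCv ▸ hC_pd v hv0
  have hvCσ0 : ⟪v, C σ0⟫ = n := by rw [← hC_sa v σ0, hCv, hn]
  have hσ0Cv : ⟪σ0, C v⟫ = n := by rw [hCv, hn]
  -- Cauchy-Schwarz type inequality: n^2 ≤ α * β
  have key : n ^ 2 ≤ α * β := by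
    set w : V := α • v - n • σ0 with hwdef
    have hw : 0 ≤ ⟪w, C w⟫ := by
      by_cases h : w = 0
      · simp [h]
      · exact le_of_lt (hC_pd w h)
    have hCw : C w = α • C v - n • C σ0 := by
      rw [hwdef, map_sub, map_smul, map_smul]
    have hexp : ⟪w, C w⟫ = α ^ 2 * β - 2 * α * n ^ 2 + n ^ 2 * α := by
      rw [hwdef, hCw]
      simp only [inner_sub_left, inner_sub_right, real_inner_smul_left,
        real_inner_smul_right, hvCv, hvCσ0, hσ0Cv]
      rw [← hαdef]
      ring
    rw [hexp] at hw
    nlinarith [hα, hβpos]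
  constructor
  · have hsum : σ0 + σR = (n / α) • C σ0 := by
      rw [hσR]; abel
    have h1 : W (σ0 + σR) ≤ ⟪σ0 + σR, C.symm (σ0 + σR)⟫ := hbound _
    have h2 : ⟪σ0 + σR, C.symm (σ0 + σR)⟫ = (n / α) ^ 2 * α := by
      rw [hsum, map_smul, C.symm_apply_apply, real_inner_smul_left,
        real_inner_smul_right, hC_sa σ0 σ0, ← hαdef]
      ring
    rw [hn4]
    calc W (σ0 + σR) ≤ (n / α) ^ 2 * α := h2 ▸ h1
      _ = n ^ 2 / α := by field_simp
  · rw [hn4]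
    have hβW : β ≤ W σ0 + c := hattain
    have : n ^ 2 / α ≤ β := by
      rw [div_le_iff₀ hα]
      nlinarith [key]
    linarith
end

section
/- Let V be a finite-dimensional real inner product space, let σ⁰ ∈ V with σ⁰ ≠ 0, and let W : V → ℝ be a continuous function with W(σ⁰) > 0. Let (cₙ) be a sequence of nonnegative real numbers with cₙ → 0, and for each n let Cₙ : V → V be a self-adjoint positive definite linear operator such that: (i) W(σ) ≤ ⟨σ, Cₙ⁻¹σ⟩ for every σ ∈ V; (ii) ⟨σ⁰, Cₙ⁻¹σ⁰⟩ ≤ W(σ⁰) + cₙ; (iii) ⟨e, Cₙe⟩ ≤ cₙ‖e‖² for every e ∈ V with ⟨e, σ⁰⟩ = 0. Then the component of Cₙσ⁰ orthogonal to σ⁰ tends to zero, that is, ‖Cₙσ⁰ − (⟨σ⁰, Cₙσ⁰⟩/‖σ⁰‖²)·σ⁰‖ → 0 as n → ∞. -/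
open scoped RealInnerProductSpace
open Filter Topology

/-!
Write `A = ⟪σ⁰, Cσ⁰⟫` and `a = Cσ⁰ - (A / ‖σ⁰‖²) σ⁰`. Since `a ⊥ σ⁰` we have `⟪a, Cσ⁰⟫ = ‖a‖²`, so
Cauchy–Schwarz for the form `⟪·, C ·⟫` and (iii) give `‖a‖⁴ ≤ c ‖a‖² A`, i.e. `‖a‖² ≤ c A`; it
remains to bound `A`. The vector `s = (‖σ⁰‖² / A) Cσ⁰` minimises `⟪σ, C⁻¹σ⟫` on the hyperplane
`⟪σ, σ⁰⟫ = ‖σ⁰‖²`, with minimum `‖σ⁰‖⁴ / A`, so (i) gives `W(s) A ≤ ‖σ⁰‖⁴`. Moreover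
`‖s - σ⁰‖² = (‖σ⁰‖² / A)² ‖a‖² ≤ c ‖σ⁰‖⁴ / A ≤ c ⟪σ⁰, C⁻¹σ⁰⟫ ≤ c (W(σ⁰) + c)` by (ii), so `s → σ⁰`,
`W(s) → W(σ⁰) > 0`, and `A` is eventually at most `2 ‖σ⁰‖⁴ / W(σ⁰)`.
-/

theorem tendsto_norm_zero_of_eventually_sq_le {ι E : Type*} [SeminormedAddCommGroup E]
    {l : Filter ι} {f : ι → E} {b : ι → ℝ} (hb : Tendsto b l (𝓝 0))
    (hfb : ∀ᶠ i in l, ‖f i‖ ^ 2 ≤ b i) : Tendsto (fun i => ‖f i‖) l (𝓝 0) := by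
  have hsqrt : Tendsto (fun i => √(b i)) l (𝓝 0) := by simpa using hb.sqrt
  refine squeeze_zero' (Eventually.of_forall fun i => norm_nonneg _) ?_ hsqrt
  filter_upwards [hfb] with i hi
  simpa using Real.abs_le_sqrt hi

section

variable {V : Type*} [NormedAddCommGroup V] [InnerProductSpace ℝ V]

theorem inner_sub_div_norm_sq_smul_left_eq_zero (v x : V) :
    ⟪x - (⟪v, x⟫ / ‖v‖ ^ 2) • v, v⟫ = 0 := by
  rcases eq_or_ne v 0 with rfl | hv
  · simp
  · rw [inner_sub_left, real_inner_smul_left, real_inner_self_eq_norm_sq, real_inner_comm,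
      div_mul_cancel₀ _ (by positivity), sub_self]

namespace LinearMap

variable {T : V →ₗ[ℝ] V}

theorem IsSymmetric.isPositive_of_forall_ne_zero (hT : T.IsSymmetric)
    (hpos : ∀ u, u ≠ 0 → 0 < ⟪u, T u⟫) : T.IsPositive :=
  (isPositive_iff T).2 ⟨hT, fun u => by
    rw [hT]
    rcases eq_or_ne u 0 with rfl | hu
    · simp
    · exact (hpos u hu).le⟩

namespace IsPositive

theorem inner_apply_sq_le (hT : T.IsPositive) (x y : V) :
    ⟪x, T y⟫ ^ 2 ≤ ⟪x, T x⟫ * ⟪y, T y⟫ := by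
  have h := LinearMap.BilinForm.apply_mul_apply_le_of_forall_zero_le ((innerₗ V).compl₂ T)
    hT.inner_nonneg_right x y
  simp only [compl₂_apply, innerₗ_apply_apply] at h
  rwa [real_inner_comm (T x) y, hT.isSymmetric, ← sq] at h

theorem norm_sub_div_norm_sq_smul_sq_le (hT : T.IsPositive) {v : V} {c : ℝ} (hc : 0 ≤ c)
    (hsmall : ∀ e, ⟪e, v⟫ = 0 → ⟪e, T e⟫ ≤ c * ‖e‖ ^ 2) :
    ‖T v - (⟪v, T v⟫ / ‖v‖ ^ 2) • v‖ ^ 2 ≤ c * ⟪v, T v⟫ := by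
  set a := T v - (⟪v, T v⟫ / ‖v‖ ^ 2) • v
  have ha : ⟪a, v⟫ = 0 := inner_sub_div_norm_sq_smul_left_eq_zero v (T v)
  have hcross : ⟪a, T v⟫ = ‖a‖ ^ 2 := by
    have hTv : T v = a + (⟪v, T v⟫ / ‖v‖ ^ 2) • v := (sub_add_cancel _ _).symm
    rw [hTv, inner_add_right, real_inner_smul_right, ha, mul_zero, add_zero,
      real_inner_self_eq_norm_sq]
  have hcs : (‖a‖ ^ 2) ^ 2 ≤ (c * ⟪v, T v⟫) * ‖a‖ ^ 2 :=
    calc (‖a‖ ^ 2) ^ 2 = ⟪a, T v⟫ ^ 2 := by rw [hcross]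
      _ ≤ ⟪a, T a⟫ * ⟪v, T v⟫ := hT.inner_apply_sq_le a v
      _ ≤ c * ‖a‖ ^ 2 * ⟪v, T v⟫ :=
        mul_le_mul_of_nonneg_right (hsmall a ha) (hT.inner_nonneg_right v)
      _ = (c * ⟪v, T v⟫) * ‖a‖ ^ 2 := by ring
  rcases (sq_nonneg ‖a‖).eq_or_lt with ha0 | ha0
  · rw [← ha0]
    exact mul_nonneg hc (hT.inner_nonneg_right v)
  · exact le_of_mul_le_mul_right (by rwa [sq (‖a‖ ^ 2)] at hcs) ha0

end IsPositive

end LinearMap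

namespace LinearEquiv

theorem inner_div_inner_smul_apply_symm (C : V ≃ₗ[ℝ] V) (v : V) :
    ⟪(‖v‖ ^ 2 / ⟪v, C v⟫) • C v, C.symm ((‖v‖ ^ 2 / ⟪v, C v⟫) • C v)⟫ = ‖v‖ ^ 4 / ⟪v, C v⟫ := by
  rw [map_smul, C.symm_apply_apply, real_inner_smul_left, real_inner_smul_right,
    real_inner_comm v (C v)]
  rcases eq_or_ne ⟪v, C v⟫ 0 with hv | hv
  · simp [hv]
  · field_simp

variable {C : V ≃ₗ[ℝ] V}

theorem norm_pow_four_le_inner_mul_inner_symm (hC : C.IsPositive) (v : V) :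
    ‖v‖ ^ 4 ≤ ⟪v, C v⟫ * ⟪v, C.symm v⟫ := by
  have h := hC.inner_apply_sq_le v (C.symm v)
  simp only [coe_coe, apply_symm_apply, real_inner_self_eq_norm_sq] at h
  rwa [real_inner_comm v (C.symm v), ← pow_mul] at h

theorem norm_div_inner_smul_apply_sub_sq_le (hC : C.IsPositive) {v : V} (hv : 0 < ⟪v, C v⟫)
    {c : ℝ} (hc : 0 ≤ c) (hsmall : ∀ e, ⟪e, v⟫ = 0 → ⟪e, C e⟫ ≤ c * ‖e‖ ^ 2) :
    ‖(‖v‖ ^ 2 / ⟪v, C v⟫) • C v - v‖ ^ 2 ≤ c * ⟪v, C.symm v⟫ := by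
  set A := ⟪v, C v⟫
  have hv0 : ‖v‖ ^ 2 ≠ 0 := by
    have : v ≠ 0 := by rintro rfl; simp [A] at hv
    positivity
  have hsub : (‖v‖ ^ 2 / A) • C v - v = (‖v‖ ^ 2 / A) • (C v - (A / ‖v‖ ^ 2) • v) := by
    rw [smul_sub, smul_smul, div_mul_div_comm, mul_comm A, div_self (mul_ne_zero hv0 hv.ne'),
      one_smul]
  calc ‖(‖v‖ ^ 2 / A) • C v - v‖ ^ 2
      = (‖v‖ ^ 2 / A) ^ 2 * ‖C v - (A / ‖v‖ ^ 2) • v‖ ^ 2 := by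
        rw [hsub, norm_smul, mul_pow, Real.norm_eq_abs, sq_abs]
    _ ≤ (‖v‖ ^ 2 / A) ^ 2 * (c * A) :=
        mul_le_mul_of_nonneg_left (hC.norm_sub_div_norm_sq_smul_sq_le hc hsmall) (sq_nonneg _)
    _ = c * (‖v‖ ^ 4 / A) := by field_simp
    _ ≤ c * ⟪v, C.symm v⟫ := by
        gcongr
        rw [div_le_iff₀' hv]
        exact norm_pow_four_le_inner_mul_inner_symm hC v

end LinearEquiv

end

theorem orthogonal_component_tendsto_zero_general
    {V : Type*} [NormedAddCommGroup V] [InnerProductSpace ℝ V]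
    (σ0 : V) (hσ0 : σ0 ≠ 0)
    (W : V → ℝ) (hWcont : Continuous W) (hWpos : 0 < W σ0)
    (c : ℕ → ℝ) (hc_nonneg : ∀ n, 0 ≤ c n)
    (hc_lim : Filter.Tendsto c Filter.atTop (nhds 0))
    (C : ℕ → (V ≃ₗ[ℝ] V))
    (hC_sa : ∀ n, ∀ u v : V, ⟪(C n) u, v⟫ = ⟪u, (C n) v⟫)
    (hC_pd : ∀ n, ∀ u : V, u ≠ 0 → 0 < ⟪u, (C n) u⟫)
    (hbound : ∀ n, ∀ σ : V, W σ ≤ ⟪σ, (C n).symm σ⟫)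
    (hattain : ∀ n, ⟪σ0, (C n).symm σ0⟫ ≤ W σ0 + c n)
    (hsmall : ∀ n, ∀ e : V, ⟪e, σ0⟫ = 0 → ⟪e, (C n) e⟫ ≤ c n * ‖e‖ ^ 2) :
    Filter.Tendsto
      (fun n => ‖(C n) σ0 - (⟪σ0, (C n) σ0⟫ / ‖σ0‖ ^ 2) • σ0‖)
      Filter.atTop (nhds 0) := by
  have hC n : (C n).IsPositive :=
    LinearMap.IsSymmetric.isPositive_of_forall_ne_zero (hC_sa n) (hC_pd n)
  have hA n : 0 < ⟪σ0, C n σ0⟫ := hC_pd n σ0 hσ0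
  set s : ℕ → V := fun n => (‖σ0‖ ^ 2 / ⟪σ0, C n σ0⟫) • C n σ0
  have hs : Tendsto s atTop (𝓝 σ0) := by
    rw [tendsto_iff_norm_sub_tendsto_zero]
    refine tendsto_norm_zero_of_eventually_sq_le (b := fun n => c n * (W σ0 + c n))
      (by simpa using hc_lim.mul (hc_lim.const_add (W σ0))) (Eventually.of_forall fun n => ?_)
    exact ((C n).norm_div_inner_smul_apply_sub_sq_le (hC n) (hA n) (hc_nonneg n) (hsmall n)).trans
      (mul_le_mul_of_nonneg_left (hattain n) (hc_nonneg n))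
  have hWs : ∀ᶠ n in atTop, W σ0 / 2 < W (s n) :=
    ((hWcont.tendsto σ0).comp hs).eventually (lt_mem_nhds (half_lt_self hWpos))
  have hA_le : ∀ᶠ n in atTop, ⟪σ0, C n σ0⟫ ≤ ‖σ0‖ ^ 4 / (W σ0 / 2) := by
    filter_upwards [hWs] with n hn
    have henergy := hbound n (s n)
    rw [(C n).inner_div_inner_smul_apply_symm, le_div_iff₀ (hA n)] at henergy
    rw [le_div_iff₀ (half_pos hWpos)]
    nlinarith [hA n]
  refine tendsto_norm_zero_of_eventually_sq_le
    (by simpa using hc_lim.mul_const (‖σ0‖ ^ 4 / (W σ0 / 2))) ?_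
  filter_upwards [hA_le] with n hn
  exact ((hC n).norm_sub_div_norm_sq_smul_sq_le (hc_nonneg n) (hsmall n)).trans
    (mul_le_mul_of_nonneg_left hn (hc_nonneg n))

/-- Coordinate-free form of the statement that the cross-term vector `a_δ` in the block
decomposition (1.18) tends to zero: the component of `Cₙσ⁰` orthogonal to `σ⁰` tends to
zero. -/
theorem orthogonal_component_tendsto_zero
    {V : Type*} [NormedAddCommGroup V] [InnerProductSpace ℝ V] [FiniteDimensional ℝ V]
    (σ0 : V) (hσ0 : σ0 ≠ 0)
    (W : V → ℝ) (hWcont : Continuous W) (hWpos : 0 < W σ0)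
    (c : ℕ → ℝ) (hc_nonneg : ∀ n, 0 ≤ c n)
    (hc_lim : Filter.Tendsto c Filter.atTop (nhds 0))
    (C : ℕ → (V ≃ₗ[ℝ] V))
    (hC_sa : ∀ n, ∀ u v : V, ⟪(C n) u, v⟫ = ⟪u, (C n) v⟫)
    (hC_pd : ∀ n, ∀ u : V, u ≠ 0 → 0 < ⟪u, (C n) u⟫)
    (hbound : ∀ n, ∀ σ : V, W σ ≤ ⟪σ, (C n).symm σ⟫)
    (hattain : ∀ n, ⟪σ0, (C n).symm σ0⟫ ≤ W σ0 + c n)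
    (hsmall : ∀ n, ∀ e : V, ⟪e, σ0⟫ = 0 → ⟪e, (C n) e⟫ ≤ c n * ‖e‖ ^ 2) :
    Filter.Tendsto
      (fun n => ‖(C n) σ0 - (⟪σ0, (C n) σ0⟫ / ‖σ0‖ ^ 2) • σ0‖)
      Filter.atTop (nhds 0) :=
  orthogonal_component_tendsto_zero_general σ0 hσ0 W hWcont hWpos c hc_nonneg hc_lim C hC_sa hC_pd
    hbound hattain hsmall
end

section
/- Fix real numbers μ > 0 and λ > 0, and let D = {(σ₁, σ₂, σ₃) ∈ ℝ³ : σ₁ ≤ σ₂ ≤ σ₃ and 0 ≤ σ₂}. Define g : ℝ³ → ℝ as follows. If σ₁ ≥ 0: g = (2μ+λ)/(2(2μ+3λ)) · (σ₁+σ₂+σ₃)² when σ₃ ≤ σ₁+σ₂, and g = (σ₁+σ₂)² + σ₃² − λ/(2μ+3λ) · (σ₁+σ₂+σ₃)² when σ₃ > σ₁+σ₂. If σ₁ < 0, set m = −μσ₁/(μ+λ): g = (σ₂+σ₃)² + σ₁² − λ/(2μ+3λ) · (σ₁+σ₂+σ₃)² when σ₂+σ₃ ≤ m; g = σ₁² +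 σ₂² + σ₃² − (2μ/(μ+λ)) σ₁σ₂ − λ/(2μ+3λ) · (σ₁+σ₂+σ₃)² when σ₂+σ₃ > m and σ₃−σ₂ ≥ m; and g = (2μ+λ)/(2(2μ+3λ)) · (σ₂+σ₃ − ((μ+2λ)/(μ+λ)) σ₁)² when σ₂+σ₃ > m and σ₃−σ₂ < m. Then g(σ₁, σ₂, σ₃) ≥ 0 for every (σ₁, σ₂, σ₃) ∈ D. -/
/-- Nonnegativity on the ordered-eigenvalue domain `D = {σ₁ ≤ σ₂ ≤ σ₃, 0 ≤ σ₂}` of the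
Gibiansky-Cherkaev-Allaire function `g` appearing in the optimal complementary energy
bound (equations (1.10), (1.12), (1.15) of the paper). -/
theorem gibiansky_cherkaev_allaire_g_nonneg
    (μ lam : ℝ) (hμ : 0 < μ) (hlam : 0 < lam)
    (g : ℝ × ℝ × ℝ → ℝ)
    (hg : ∀ σ1 σ2 σ3 : ℝ, g (σ1, σ2, σ3) =
      if 0 ≤ σ1 then
        (if σ3 ≤ σ1 + σ2 then
          (2 * μ + lam) / (2 * (2 * μ + 3 * lam)) * (σ1 + σ2 + σ3) ^ 2
        else
          (σ1 + σ2) ^ 2 + σ3 ^ 2 - lam / (2 * μ + 3 * lam) * (σ1 + σ2 + σ3) ^ 2)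
      else
        (if σ2 + σ3 ≤ -μ * σ1 / (μ + lam) then
          (σ2 + σ3) ^ 2 + σ1 ^ 2 - lam / (2 * μ + 3 * lam) * (σ1 + σ2 + σ3) ^ 2
        else if -μ * σ1 / (μ + lam) ≤ σ3 - σ2 then
          σ1 ^ 2 + σ2 ^ 2 + σ3 ^ 2 - (2 * μ / (μ + lam)) * σ1 * σ2
            - lam / (2 * μ + 3 * lam) * (σ1 + σ2 + σ3) ^ 2
        else
          (2 * μ + lam) / (2 * (2 * μ + 3 * lam))
            * (σ2 + σ3 - ((μ + 2 * lam) / (μ + lam)) * σ1) ^ 2)) :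
    ∀ p : ℝ × ℝ × ℝ, p.1 ≤ p.2.1 → p.2.1 ≤ p.2.2 → 0 ≤ p.2.1 → 0 ≤ g p := by
  rintro ⟨σ1, σ2, σ3⟩ h12 h23 h2
  simp only at h12 h23 h2
  rw [hg σ1 σ2 σ3]
  have hd : (0:ℝ) < 2 * μ + 3 * lam := by linarith
  have hml : (0:ℝ) < μ + lam := by linarith
  split_ifs with h1 ha hb hc
  · positivity
  · rw [sub_nonneg, div_mul_eq_mul_div, div_le_iff₀ hd]
    nlinarith [sq_nonneg (σ1 + σ2 - σ3), sq_nonneg (σ1 + σ2 + σ3), sq_nonneg σ3,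
      sq_nonneg (σ1 + σ2)]
  · rw [sub_nonneg, div_mul_eq_mul_div, div_le_iff₀ hd]
    nlinarith [sq_nonneg (σ2 + σ3 - σ1), sq_nonneg (σ1 + σ2 + σ3), sq_nonneg σ1,
      sq_nonneg (σ2 + σ3)]
  · have hσ1 : σ1 < 0 := lt_of_not_ge h1
    have hmul : 2 * μ / (μ + lam) * σ1 * σ2 ≤ 0 := by
      have hc' : (0:ℝ) ≤ 2 * μ / (μ + lam) := by positivity
      have h12' : σ1 * σ2 ≤ 0 := mul_nonpos_of_nonpos_of_nonneg hσ1.le h2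
      calc 2 * μ / (μ + lam) * σ1 * σ2 = 2 * μ / (μ + lam) * (σ1 * σ2) := by ring
        _ ≤ 0 := mul_nonpos_of_nonneg_of_nonpos hc' h12'
    have key : lam / (2 * μ + 3 * lam) * (σ1 + σ2 + σ3) ^ 2 ≤ σ1 ^ 2 + σ2 ^ 2 + σ3 ^ 2 := by
      rw [div_mul_eq_mul_div, div_le_iff₀ hd]
      nlinarith [sq_nonneg (σ1 - σ2), sq_nonneg (σ2 - σ3), sq_nonneg (σ1 - σ3),
        sq_nonneg σ1, sq_nonneg σ2, sq_nonneg σ3]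
    linarith
  · positivity
end

section
/- Let (Ω, μ) be a measure space and let a : Ω → ℝ be a measurable function with a(x) > 0 for μ-almost every x. Fix λ > 0 and define f* : Ω → ℝ by f*(x) = min(λ·a(x), 1). Let f : Ω → ℝ be measurable with 0 < f(x) ≤ 1 for μ-almost every x, and suppose f and f* are integrable with ∫_Ω f dμ = ∫_Ω f* dμ, and that x ↦ a(x)²/f(x) and x ↦ a(x)²/f*(x) are integrable. Then ∫_Ω a(x)²/f*(x) dμ ≤ ∫_Ω a(x)²/f(x) dμ. -/
open MeasureTheory

lemma key_pointwise (a lam f : ℝ) (ha : 0 < a) (hlam : 0 < lam)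
    (hf : 0 < f) (hf1 : f ≤ 1) :
    a ^ 2 / min (lam * a) 1 ≤ a ^ 2 / f + (1 / lam ^ 2) * (f - min (lam * a) 1) := by
  have hcpos : 0 < 1 / lam ^ 2 := by positivity
  rcases le_or_gt (lam * a) 1 with h | h
  · rw [min_eq_left h]
    have hdiff : a ^ 2 / f + (1 / lam ^ 2) * (f - lam * a) - a ^ 2 / (lam * a)
        = (lam * a - f) ^ 2 / (lam ^ 2 * f) := by
      field_simp
      ring
    have : 0 ≤ (lam * a - f) ^ 2 / (lam ^ 2 * f) := by positivity
    linarith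
  · rw [min_eq_right h.le]
    have hca : 1 / lam ^ 2 ≤ a ^ 2 := by
      rw [div_le_iff₀ (by positivity)]
      nlinarith
    rw [div_add' _ _ _ hf.ne', div_le_div_iff₀ one_pos hf]
    nlinarith [mul_nonneg (sub_nonneg.2 hf1) (sub_nonneg.2 hca),
      mul_nonneg hcpos.le (sq_nonneg (1 - f))]

/-- Optimality of the Lagrange-multiplier volume-fraction profile (equations
(0.4f)-(0.4h) of the paper): among all profiles `f` with `0 < f ≤ 1` a.e. and the same
total as `f* = min (λ a) 1`, the profile `f*` minimizes `∫ a²/f`. -/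
theorem optimal_volume_fraction_profile
    {Ω : Type*} [MeasurableSpace Ω] (μ : Measure Ω)
    (a : Ω → ℝ) (ha_meas : Measurable a) (ha_pos : ∀ᵐ x ∂μ, 0 < a x)
    (lam : ℝ) (hlam : 0 < lam)
    (fstar : Ω → ℝ) (hfstar : ∀ x, fstar x = min (lam * a x) 1)
    (f : Ω → ℝ) (hf_meas : Measurable f)
    (hf_pos : ∀ᵐ x ∂μ, 0 < f x) (hf_le : ∀ᵐ x ∂μ, f x ≤ 1)
    (hf_int : Integrable f μ) (hfstar_int : Integrable fstar μ)
    (htotal : ∫ x, f x ∂μ = ∫ x, fstar x ∂μ)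
    (hint_f : Integrable (fun x => a x ^ 2 / f x) μ)
    (hint_fstar : Integrable (fun x => a x ^ 2 / fstar x) μ) :
    ∫ x, a x ^ 2 / fstar x ∂μ ≤ ∫ x, a x ^ 2 / f x ∂μ := by
  have hae : ∀ᵐ x ∂μ, a x ^ 2 / fstar x
      ≤ a x ^ 2 / f x + (1 / lam ^ 2) * (f x - fstar x) := by
    filter_upwards [ha_pos, hf_pos, hf_le] with x hax hfx hfx1
    rw [hfstar x]
    exact key_pointwise (a x) lam (f x) hax hlam hfx hfx1
  have hrhs_int : Integrable
      (fun x => a x ^ 2 / f x + (1 / lam ^ 2) * (f x - fstar x)) μ :=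
    hint_f.add ((hf_int.sub hfstar_int).const_mul _)
  calc ∫ x, a x ^ 2 / fstar x ∂μ
      ≤ ∫ x, (a x ^ 2 / f x + (1 / lam ^ 2) * (f x - fstar x)) ∂μ :=
        integral_mono_ae hint_fstar hrhs_int hae
    _ = ∫ x, a x ^ 2 / f x ∂μ
        + (1 / lam ^ 2) * (∫ x, f x ∂μ - ∫ x, fstar x ∂μ) := by
        have hsub : Integrable (fun x => f x - fstar x) μ := hf_int.sub hfstar_int
        rw [integral_add hint_f (hsub.const_mul _), integral_const_mul,
          integral_sub hf_int hfstar_int]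
    _ = ∫ x, a x ^ 2 / f x ∂μ := by rw [htotal]; ring
end
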